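/- arXiv:0710.5336 — 4 statements merged into one kernel-verified Lean document; each statement's English description precedes it below -/
import Mathlib

section
/- Let R̂ = ℝ[[x,y,z,w]]/(x² + y² − (w+1)z²) and P = (x,y,z). Then [R̂/PR̂] = 0 in the Grothendieck group G(R̂) of finitely generated R̂-modules. -/
/-!
Let `s = √(1 + w) ∈ ℝ[[w]]` be the binomial series. Then
`x² + y² − (w+1)z² = y² − (sz − x)(sz + x)` lies in `J = (sz − x, y)`, and `J + (z) = P`.
Since `(y)` and `(x, y)` are prime ideals of `ℝ[[x,y,z,w]]` not containing `x` and `z`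
respectively, `z` is a non-zero-divisor on `ℝ[[x,y,z,w]]/J`, hence on `R̂/JR̂`.
The exact sequence `0 → R̂/JR̂ --z--> R̂/JR̂ → R̂/PR̂ → 0` then gives
`[R̂/PR̂] = [R̂/JR̂] − [R̂/JR̂] = 0`.
-/

universe u

structure FGModuleRep (R : Type u) [CommRing R] : Type (u + 1) where
  carrier : Type u
  [isAddCommGroup : AddCommGroup carrier]
  [isModule : Module R carrier]
  [isFinite : Module.Finite R carrier]

attribute [instance] FGModuleRep.isAddCommGroup FGModuleRep.isModule FGModuleRep.isFinite

variable (R : Type u) [CommRing R]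

def sesRelations : AddSubgroup (FreeAbelianGroup (FGModuleRep R)) :=
  AddSubgroup.closure
    { z | ∃ (M₁ M₂ M₃ : FGModuleRep R) (f : M₁.carrier →ₗ[R] M₂.carrier)
        (g : M₂.carrier →ₗ[R] M₃.carrier),
        Function.Injective f ∧ Function.Surjective g ∧
        LinearMap.range f = LinearMap.ker g ∧
        z = FreeAbelianGroup.of M₂ - FreeAbelianGroup.of M₁ - FreeAbelianGroup.of M₃ }

/-- The Grothendieck group of finitely generated `R`-modules. -/
def GGroup : Type (u + 1) :=
  FreeAbelianGroup (FGModuleRep R) ⧸ sesRelations R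

noncomputable instance : AddCommGroup (GGroup R) :=
  QuotientAddGroup.Quotient.addCommGroup _

def GGroup.cls (M : Type u) [AddCommGroup M] [Module R M] [Module.Finite R M] : GGroup R :=
  QuotientAddGroup.mk (FreeAbelianGroup.of ⟨M⟩)

noncomputable section

open MvPowerSeries

/-- The power series `x² + y² − (w+1)z² ∈ ℝ[[x,y,z,w]]`
(with `x = X 0`, `y = X 1`, `z = X 2`, `w = X 3`). -/
def quadSeries : MvPowerSeries (Fin 4) ℝ :=
  X 0 ^ 2 + X 1 ^ 2 - (X 3 + 1) * X 2 ^ 2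

/-- The complete local ring `R̂ = ℝ[[x,y,z,w]]/(x² + y² − (w+1)z²)`. -/
def Rhat : Type := MvPowerSeries (Fin 4) ℝ ⧸ Ideal.span {quadSeries}

instance : CommRing Rhat := by unfold Rhat; infer_instance

/-- The images `x`, `y`, `z`, `w` of the four variables in `R̂`. -/
def xh : Rhat := Ideal.Quotient.mk _ (X 0)
def yh : Rhat := Ideal.Quotient.mk _ (X 1)
def zh : Rhat := Ideal.Quotient.mk _ (X 2)
def wh : Rhat := Ideal.Quotient.mk _ (X 3)

/-- The ideal `P R̂ = (x, y, z)` of `R̂`. -/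
def Phat : Ideal Rhat := Ideal.span {xh, yh, zh}

instance : Module.Finite Rhat (Rhat ⧸ Phat) :=
  Module.Finite.of_surjective (Algebra.linearMap Rhat (Rhat ⧸ Phat)) Ideal.Quotient.mk_surjective

open Ideal

theorem GGroup.cls_eq_add_of_exact {A : Type u} [CommRing A] {M₁ M₂ M₃ : Type u}
    [AddCommGroup M₁] [Module A M₁] [Module.Finite A M₁]
    [AddCommGroup M₂] [Module A M₂] [Module.Finite A M₂]
    [AddCommGroup M₃] [Module A M₃] [Module.Finite A M₃]
    {f : M₁ →ₗ[A] M₂} {g : M₂ →ₗ[A] M₃} (hf : Function.Injective f)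
    (hg : Function.Surjective g) (hfg : LinearMap.range f = LinearMap.ker g) :
    GGroup.cls A M₂ = GGroup.cls A M₁ + GGroup.cls A M₃ := by
  rw [← sub_eq_zero, sub_add_eq_sub_sub]
  exact (QuotientAddGroup.eq_zero_iff _).mpr
    (AddSubgroup.subset_closure ⟨⟨M₁⟩, ⟨M₂⟩, ⟨M₃⟩, f, g, hf, hg, hfg, rfl⟩)

theorem GGroup.cls_quotient_sup_span_eq_zero {A : Type u} [CommRing A] {I P : Ideal A} {t : A}
    (ht : ∀ r, t * r ∈ I → r ∈ I) (hP : I ⊔ span {t} = P) :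
    GGroup.cls A (A ⧸ P) = 0 := by
  subst hP
  let f : (A ⧸ I) →ₗ[A] A ⧸ I := t • LinearMap.id
  have hf_mk (r : A) : f (Submodule.Quotient.mk r) = Submodule.Quotient.mk (t * r) := rfl
  have hf : Function.Injective f := by
    refine (injective_iff_map_eq_zero f).mpr fun a ha => ?_
    obtain ⟨r, rfl⟩ := Submodule.Quotient.mk_surjective I a
    rw [hf_mk, Submodule.Quotient.mk_eq_zero] at ha
    exact (Submodule.Quotient.mk_eq_zero I).mpr (ht r ha)
  let g : (A ⧸ I) →ₗ[A] A ⧸ (I ⊔ span {t}) := Submodule.factor le_sup_left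
  have hfg : LinearMap.range f = LinearMap.ker g := by
    ext a
    obtain ⟨r, rfl⟩ := Submodule.Quotient.mk_surjective I a
    rw [LinearMap.mem_range, LinearMap.mem_ker, ← Submodule.mkQ_apply, Submodule.factor_mk,
      Submodule.mkQ_apply, Submodule.mkQ_apply, Submodule.Quotient.mk_eq_zero]
    constructor
    · rintro ⟨b, hb⟩
      obtain ⟨u, rfl⟩ := Submodule.Quotient.mk_surjective I b
      rw [hf_mk, Submodule.Quotient.eq] at hb
      have htu : t * u ∈ I ⊔ span {t} := mem_sup_right (mem_span_singleton'.mpr ⟨u, mul_comm u t⟩)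
      simpa using sub_mem htu (mem_sup_left hb)
    · intro hr
      obtain ⟨i, hi, v, hv, rfl⟩ := Submodule.mem_sup.mp hr
      obtain ⟨u, rfl⟩ := mem_span_singleton'.mp hv
      refine ⟨Submodule.Quotient.mk u, ?_⟩
      rw [hf_mk, Submodule.Quotient.eq]
      simpa [mul_comm] using neg_mem hi
  have := GGroup.cls_eq_add_of_exact hf (Submodule.factor_surjective _) hfg
  rwa [left_eq_add] at this

theorem mem_span_sub_pair_of_mul_mem {A : Type*} [CommRing A] {x y z s r : A}
    (hy : (span {y}).IsPrime) (hxy : x ∉ span {y}) (hP : (span {x, y}).IsPrime)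
    (hz : z ∉ span {x, y}) (h : z * r ∈ span {s * z - x, y}) :
    r ∈ span {s * z - x, y} := by
  obtain ⟨α, β, hαβ⟩ := mem_span_pair.mp h
  have hsαr : z * (s * α - r) ∈ span {x, y} :=
    mem_span_pair.mpr ⟨α, -β, by linear_combination -hαβ⟩
  obtain ⟨μ, ν, hμν⟩ := mem_span_pair.mp ((hP.mem_or_mem hsαr).resolve_left hz)
  have hxα : x * (α - z * μ) ∈ span {y} :=
    mem_span_singleton'.mpr ⟨z * ν + β, by linear_combination z * hμν + hαβ⟩
  obtain ⟨τ, hτ⟩ := mem_span_singleton'.mp ((hy.mem_or_mem hxα).resolve_left hxy)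
  exact mem_span_pair.mpr ⟨μ, s * τ - ν, by linear_combination s * hτ - hμν⟩

theorem span_sub_pair_sup_span_eq {A : Type*} [CommRing A] (x y z s : A) :
    span {s * z - x, y} ⊔ span {z} = span {x, y, z} := by
  have hz : z ∈ span {x, y, z} := subset_span (by simp)
  have hz' : z ∈ span {s * z - x, y} ⊔ span {z} := mem_sup_right (mem_span_singleton_self z)
  refine le_antisymm (sup_le ?_ ?_) ?_
  · rw [span_le, Set.insert_subset_iff, Set.singleton_subset_iff]
    exact ⟨sub_mem (mul_mem_left _ s hz) (subset_span (by simp)), subset_span (by simp)⟩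
  · rwa [span_le, Set.singleton_subset_iff]
  · rw [span_le, Set.insert_subset_iff, Set.insert_subset_iff, Set.singleton_subset_iff]
    refine ⟨?_, mem_sup_left (subset_span (by simp)), hz'⟩
    have hc : s * z - x ∈ span {s * z - x, y} ⊔ span {z} := mem_sup_left (subset_span (by simp))
    simpa using sub_mem (mul_mem_left _ s hz') hc

theorem Ideal.Quotient.mem_map_of_mul_mem {A : Type*} [CommRing A] {Q J : Ideal A}
    (hQJ : Q ≤ J) {t : A} (ht : ∀ r, t * r ∈ J → r ∈ J) (ρ : A ⧸ Q)
    (h : mk Q t * ρ ∈ J.map (mk Q)) :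
    ρ ∈ J.map (mk Q) := by
  obtain ⟨r, rfl⟩ := mk_surjective ρ
  rw [← map_mul, mem_quotient_iff_mem hQJ] at h
  exact (mem_quotient_iff_mem hQJ).mpr (ht r h)

namespace MvPowerSeries

variable {σ τ R : Type*} [CommRing R]

theorem exists_sq_eq_X_add_one [Algebra ℚ R] (i : σ) :
    ∃ s : MvPowerSeries σ R, s ^ 2 = X i + 1 := by
  refine ⟨PowerSeries.toMvPowerSeries i (PowerSeries.binomialSeries R (1 / 2 : ℚ)), ?_⟩
  have h := PowerSeries.binomialSeries_nat (R := ℚ) (A := R) 1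
  rw [Nat.cast_one, pow_one] at h
  rw [← map_pow, sq, ← PowerSeries.binomialSeries_add, add_halves, h, map_add, map_one,
    PowerSeries.toMvPowerSeries_X, add_comm]

theorem killCompl_surjective (e : σ ↪ τ) :
    Function.Surjective (killCompl (R := R) e) :=
  fun p => ⟨rename e p, killCompl_rename_app p⟩

theorem ker_killCompl_subtype_ne (i : σ) :
    RingHom.ker (killCompl (R := R) (Function.Embedding.subtype (· ≠ i))) = span {X i} := by
  refine le_antisymm (fun f hf => mem_span_singleton.mpr (X_dvd_iff.mpr fun m hm => ?_)) ?_
  · have hsupp : ↑m.support ⊆ Set.range (Function.Embedding.subtype (· ≠ i)) :=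
      fun j hj => ⟨⟨j, fun h => (Finsupp.mem_support_iff.mp hj) (h ▸ hm)⟩, rfl⟩
    rw [← Finsupp.embDomain_comapDomain hsupp, ← coeff_killCompl, RingHom.mem_ker.mp hf,
      map_zero]
  · rw [span_le, Set.singleton_subset_iff, SetLike.mem_coe, RingHom.mem_ker]
    exact killCompl_X_eq_zero (by simp)

theorem X_notMem_span_X [Nontrivial R] {i j : σ} (h : i ≠ j) :
    (X j : MvPowerSeries σ R) ∉ span {X i} := by
  rw [mem_span_singleton, X_dvd_iff, not_forall]
  exact ⟨Finsupp.single j 1, by simp [h]⟩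

theorem killCompl_subtype_ne_X {i j : σ} (h : j ≠ i) :
    killCompl (R := R) (Function.Embedding.subtype (· ≠ i)) (X j) = X ⟨j, h⟩ :=
  killCompl_X (e := Function.Embedding.subtype (· ≠ i)) ⟨j, h⟩

theorem isPrime_span_X [IsDomain R] (i : σ) :
    (span {X i} : Ideal (MvPowerSeries σ R)).IsPrime :=
  have := NoZeroDivisors.to_isDomain (MvPowerSeries {j // j ≠ i} R)
  ker_killCompl_subtype_ne (R := R) i ▸ RingHom.ker_isPrime _

theorem span_X_pair_eq_comap {i j : σ} (h : j ≠ i) :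
    span {X i, X j} = comap (killCompl (R := R) (Function.Embedding.subtype (· ≠ i)))
      (span {X (⟨j, h⟩ : {k // k ≠ i})}) := by
  set κ := killCompl (R := R) (Function.Embedding.subtype (· ≠ i))
  have hmap : Ideal.map κ (span {X i, X j}) = span {X (⟨j, h⟩ : {k // k ≠ i})} := by
    rw [map_span, Set.image_pair, killCompl_X_eq_zero (by simp),
      killCompl_subtype_ne_X h, span_insert_zero]
  rw [← hmap, comap_map_of_surjective _ (killCompl_surjective _), ← RingHom.ker_eq_comap_bot,
    ker_killCompl_subtype_ne, left_eq_sup, span_le, Set.singleton_subset_iff]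
  exact subset_span (by simp)

theorem isPrime_span_X_pair [IsDomain R] {i j : σ} (h : j ≠ i) :
    (span {X i, X j} : Ideal (MvPowerSeries σ R)).IsPrime :=
  span_X_pair_eq_comap (R := R) h ▸ comap_isPrime _ _ (H := isPrime_span_X _)

theorem X_notMem_span_X_pair [Nontrivial R] {i j k : σ} (hj : j ≠ i) (hki : k ≠ i)
    (hkj : k ≠ j) :
    (X k : MvPowerSeries σ R) ∉ span {X i, X j} := by
  rw [span_X_pair_eq_comap hj, mem_comap, killCompl_subtype_ne_X hki]
  exact X_notMem_span_X (fun he => hkj (congrArg Subtype.val he).symm)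

end MvPowerSeries

/-- `[R̂/PR̂] = 0` in `G(R̂)`. -/
theorem class_of_quotient_vanishes_in_completion :
    GGroup.cls Rhat (Rhat ⧸ Phat) = 0 := by
  obtain ⟨s, hs⟩ := MvPowerSeries.exists_sq_eq_X_add_one (R := ℝ) (3 : Fin 4)
  set J : Ideal (MvPowerSeries (Fin 4) ℝ) := span {s * X 2 - X 0, X 1}
  have hq : span {quadSeries} ≤ J := by
    rw [span_le, Set.singleton_subset_iff, SetLike.mem_coe, mem_span_pair]
    exact ⟨-(s * X 2 + X 0), X 1, by unfold quadSeries; linear_combination (-X 2 ^ 2) * hs⟩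
  have hreg (r) : X 2 * r ∈ J → r ∈ J :=
    mem_span_sub_pair_of_mul_mem (isPrime_span_X 1) (X_notMem_span_X (by decide))
      (isPrime_span_X_pair (by decide)) (X_notMem_span_X_pair (by decide) (by decide) (by decide))
  have hP : (J ⊔ span {X 2}).map (Ideal.Quotient.mk (span {quadSeries})) = Phat := by
    rw [span_sub_pair_sup_span_eq, map_span]
    simp only [Set.image_insert_eq, Set.image_singleton]
    rfl
  rw [Ideal.map_sup, Ideal.map_span _ {X 2}, Set.image_singleton] at hP
  exact GGroup.cls_quotient_sup_span_eq_zero (Quotient.mem_map_of_mul_mem hq hreg) hP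
end
end

section
/- Let R̂ = ℝ[[x,y,z,w]]/(x² + y² − (w+1)z²), let α ∈ R̂ be a unit with α² = w + 1, let Q = (x, y − αz)R̂, and P R̂ = (x,y,z)R̂. Then the sequence 0 → R̂/Q → R̂/Q → R̂/PR̂ → 0, where the first map is multiplication by y + αz and the second is the natural surjection, is a short exact sequence of R̂-modules. In particular, multiplication by y + αz is injective on R̂/Q with cokernel R̂/PR̂. -/
/-!
Lift `α` to a power series `a`. Since `a² ≡ w + 1` modulo `f = x² + y² − (w+1)z²`, a unit
multiple of `f` equals `x² + (y + a z)(y − a z)`, so `f ∈ (x, y − a z)` and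
`R̂/Q = ℝ[[x,y,z,w]]/(x, y − a z)`. There `z` is a nonzerodivisor: from
`z r = A x + B (y − a z)` one gets `y B ∈ (x, z)`, hence `B = B₁ x + B₂ z`, and then
`z (r − B₂ (y − a z)) ∈ (x)`, hence `r ∈ (x, y − a z)`. Modulo `Q`, `y + α z` acts as `2 α z`,
so it is injective; and since `2` and `α` are units, `Q + (y + α z) = (x, y, z)`, which is
exactness in the middle.
-/

noncomputable section

open MvPowerSeries

namespace MvPowerSeries

variable {σ R : Type*}

section Semiring

variable [Semiring R]

theorem coeff_add_single_X_mul (i : σ) (m : σ →₀ ℕ) (φ : MvPowerSeries σ R) :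
    coeff (m + Finsupp.single i 1) (X i * φ) = coeff m φ := by
  rw [add_comm, X_def, coeff_add_monomial_mul, one_mul]

theorem X_dvd_of_X_dvd_X_mul {i j : σ} (hij : i ≠ j) {φ : MvPowerSeries σ R}
    (h : X i ∣ X j * φ) : X i ∣ φ := by
  rw [X_dvd_iff] at h ⊢
  intro m hm
  rw [← coeff_add_single_X_mul j m φ]
  exact h _ (by simp [hij.symm, hm])

end Semiring

section CommRing

variable [CommRing R]

theorem mem_span_X_pair_iff {i k : σ} {φ : MvPowerSeries σ R} :
    φ ∈ Ideal.span {X i, X k} ↔ ∀ m : σ →₀ ℕ, m i = 0 → m k = 0 → coeff m φ = 0 := by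
  constructor
  · rintro hφ m hi hk
    obtain ⟨a, b, rfl⟩ := Ideal.mem_span_pair.mp hφ
    rw [map_add, mul_comm a, mul_comm b, X_dvd_iff.mp (dvd_mul_right _ a) m hi,
      X_dvd_iff.mp (dvd_mul_right _ b) m hk, add_zero]
  · intro h
    -- `ψ` collects the monomials of `φ` divisible by `X i`, divided by `X i`.
    let ψ : MvPowerSeries σ R := fun m ↦ coeff (m + Finsupp.single i 1) φ
    have hψ : X k ∣ φ - X i * ψ := by
      refine X_dvd_iff.mpr fun m hk ↦ ?_
      rw [map_sub, sub_eq_zero]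
      by_cases hi : m i = 0
      · rw [h m hi hk, X_dvd_iff.mp (dvd_mul_right _ ψ) m hi]
      · obtain ⟨n, rfl⟩ : ∃ n, m = n + Finsupp.single i 1 :=
          ⟨m - Finsupp.single i 1,
            (tsub_add_cancel_of_le (by simpa [Nat.one_le_iff_ne_zero])).symm⟩
        rw [coeff_add_single_X_mul]
        rfl
    obtain ⟨χ, hχ⟩ := hψ
    exact Ideal.mem_span_pair.mpr ⟨ψ, χ, by rw [mul_comm ψ, mul_comm χ, ← hχ]; ring⟩

theorem mem_span_X_pair_of_X_mul_mem {i j k : σ} (hji : j ≠ i) (hjk : j ≠ k)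
    {φ : MvPowerSeries σ R} (h : X j * φ ∈ Ideal.span {X i, X k}) :
    φ ∈ Ideal.span {X i, X k} := by
  rw [mem_span_X_pair_iff] at h ⊢
  intro m hi hk
  rw [← coeff_add_single_X_mul j m φ]
  exact h _ (by simp [hji, hi]) (by simp [hjk, hk])

theorem mem_span_X_sub_mul_X_of_X_mul_mem {i j k : σ} (hij : i ≠ j) (hik : i ≠ k)
    (hjk : j ≠ k) (a : MvPowerSeries σ R) {φ : MvPowerSeries σ R}
    (h : X k * φ ∈ Ideal.span {X i, X j - a * X k}) :
    φ ∈ Ideal.span {X i, X j - a * X k} := by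
  obtain ⟨A, B, hAB⟩ := Ideal.mem_span_pair.mp h
  have hB : B ∈ Ideal.span {X i, X k} := by
    refine mem_span_X_pair_of_X_mul_mem hij.symm hjk ?_
    exact Ideal.mem_span_pair.mpr ⟨-A, φ + B * a, by linear_combination -hAB⟩
  obtain ⟨B₁, B₂, rfl⟩ := Ideal.mem_span_pair.mp hB
  have hX : X i ∣ X k * (φ - B₂ * (X j - a * X k)) :=
    ⟨A + B₁ * (X j - a * X k), by linear_combination -hAB⟩
  obtain ⟨C, hC⟩ := X_dvd_of_X_dvd_X_mul hik hX
  exact Ideal.mem_span_pair.mpr ⟨C, B₂, by linear_combination -hC⟩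

end CommRing

end MvPowerSeries

section QuotientBySpan

variable {R : Type*} [CommRing R]

theorem span_pair_sub_sup_span_add_eq (x y z : R) {α : R} (h2 : IsUnit (2 : R))
    (hα : IsUnit α) :
    Ideal.span {x, y - α * z} ⊔ Ideal.span {y + α * z} = Ideal.span {x, y, z} := by
  set J := Ideal.span {x, y - α * z} ⊔ Ideal.span {y + α * z}
  have hx : x ∈ J := Ideal.mem_sup_left (Ideal.subset_span (by simp))
  have hsub : y - α * z ∈ J := Ideal.mem_sup_left (Ideal.subset_span (by simp))
  have hadd : y + α * z ∈ J := Ideal.mem_sup_right (Ideal.mem_span_singleton_self _)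
  obtain ⟨γ, hγ⟩ := h2.exists_right_inv
  obtain ⟨β, hβ⟩ := (h2.mul hα).exists_right_inv
  have hyP : y ∈ Ideal.span {x, y, z} := Ideal.subset_span (by simp)
  have hzP : z ∈ Ideal.span {x, y, z} := Ideal.subset_span (by simp)
  refine le_antisymm (sup_le ?_ ?_) (Ideal.span_le.mpr ?_)
  · refine Ideal.span_le.mpr (Set.insert_subset_iff.mpr ⟨Ideal.subset_span (by simp), ?_⟩)
    exact Set.singleton_subset_iff.mpr (sub_mem hyP (Ideal.mul_mem_left _ α hzP))
  · exact Ideal.span_singleton_le_iff_mem _ |>.mpr (add_mem hyP (Ideal.mul_mem_left _ α hzP))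
  · simp only [Set.insert_subset_iff, Set.singleton_subset_iff, SetLike.mem_coe]
    refine ⟨hx, ?_, ?_⟩
    · have hy : y = γ * (y - α * z) + γ * (y + α * z) := by linear_combination (-y) * hγ
      exact hy ▸ J.add_mem (J.mul_mem_left γ hsub) (J.mul_mem_left γ hadd)
    · have hz : z = β * ((y + α * z) - (y - α * z)) := by linear_combination (-z) * hβ
      exact hz ▸ J.mul_mem_left β (J.sub_mem hadd hsub)

theorem lsmul_quotient_mk (Q : Ideal R) (c r : R) :
    LinearMap.lsmul R (R ⧸ Q) c (Ideal.Quotient.mk Q r) = Ideal.Quotient.mk Q (c * r) :=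
  rfl

theorem injective_lsmul_quotient_iff {Q : Ideal R} {c : R} :
    Function.Injective (LinearMap.lsmul R (R ⧸ Q) c) ↔ ∀ r : R, c * r ∈ Q → r ∈ Q := by
  rw [← LinearMap.ker_eq_bot, LinearMap.ker_eq_bot']
  refine ⟨fun h r hr ↦ ?_, fun h m hm ↦ ?_⟩
  · rw [← Ideal.Quotient.eq_zero_iff_mem] at hr ⊢
    exact h _ (by rw [lsmul_quotient_mk, hr])
  · obtain ⟨r, rfl⟩ := Ideal.Quotient.mk_surjective m
    rw [lsmul_quotient_mk, Ideal.Quotient.eq_zero_iff_mem] at hm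
    exact Ideal.Quotient.eq_zero_iff_mem.mpr (h r hm)

theorem mem_span_pair_sub_of_add_mul_mem {x y z α : R} (h2 : IsUnit (2 : R)) (hα : IsUnit α)
    (hz : ∀ r : R, z * r ∈ Ideal.span {x, y - α * z} → r ∈ Ideal.span {x, y - α * z})
    {r : R} (hr : (y + α * z) * r ∈ Ideal.span {x, y - α * z}) :
    r ∈ Ideal.span {x, y - α * z} := by
  refine hz r ((Ideal.unit_mul_mem_iff_mem _ (h2.mul hα)).mp ?_)
  -- `(y + α z) r - (y - α z) r = 2 α (z r)`
  have hsub : (y - α * z) * r ∈ Ideal.span {x, y - α * z} :=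
    Ideal.mul_mem_right _ _ (Ideal.subset_span (by simp))
  simpa [sub_mul, add_mul, mul_assoc, two_mul] using Ideal.sub_mem _ hr hsub

theorem range_lsmul_eq_ker {Q P : Ideal R} {c : R} (hP : Q ⊔ Ideal.span {c} = P)
    (g : (R ⧸ Q) →ₗ[R] R ⧸ P)
    (hg : ∀ r : R, g (Ideal.Quotient.mk Q r) = Ideal.Quotient.mk P r) :
    LinearMap.range (LinearMap.lsmul R (R ⧸ Q) c) = LinearMap.ker g := by
  have hQP : Q ≤ P := hP ▸ le_sup_left
  ext m
  obtain ⟨r, rfl⟩ := Ideal.Quotient.mk_surjective m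
  have hcP : c ∈ P := hP ▸ Ideal.mem_sup_right (Ideal.mem_span_singleton_self c)
  rw [LinearMap.mem_range, LinearMap.mem_ker, hg, Ideal.Quotient.eq_zero_iff_mem]
  constructor
  · rintro ⟨n, hn⟩
    obtain ⟨s, rfl⟩ := Ideal.Quotient.mk_surjective n
    rw [lsmul_quotient_mk, Ideal.Quotient.eq] at hn
    simpa using P.sub_mem (P.mul_mem_right s hcP) (hQP hn)
  · intro hr
    obtain ⟨q, hq, t, ht, rfl⟩ := Submodule.mem_sup.mp (hP ▸ hr)
    obtain ⟨s, rfl⟩ := Ideal.mem_span_singleton'.mp ht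
    refine ⟨Ideal.Quotient.mk Q s, ?_⟩
    rw [lsmul_quotient_mk, Ideal.Quotient.eq]
    simpa [mul_comm] using Q.neg_mem hq

end QuotientBySpan

abbrev Rhat.mk : MvPowerSeries (Fin 4) ℝ →+* Rhat := Ideal.Quotient.mk (Ideal.span {quadSeries})

theorem Rhat.mk_surjective : Function.Surjective Rhat.mk := Ideal.Quotient.mk_surjective

theorem isUnit_two_rhat : IsUnit (2 : Rhat) := by
  have h2 : IsUnit (2 : MvPowerSeries (Fin 4) ℝ) := by
    rw [isUnit_iff_constantCoeff, map_ofNat]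
    norm_num
  convert h2.map Rhat.mk
  exact (map_ofNat Rhat.mk 2).symm

theorem quadSeries_mem_span_X_sub_mul_X {a : MvPowerSeries (Fin 4) ℝ}
    (ha : Rhat.mk a ^ 2 = wh + 1) : quadSeries ∈ Ideal.span {X 0, X 1 - a * X 2} := by
  have hmem : a ^ 2 - (X 3 + 1) ∈ Ideal.span {quadSeries} := by
    rw [← Ideal.Quotient.eq, map_pow]
    exact ha.trans (by rw [map_add, map_one]; rfl)
  obtain ⟨t, ht⟩ := Ideal.mem_span_singleton'.mp hmem
  have hunit : IsUnit (1 - t * X 2 ^ 2 : MvPowerSeries (Fin 4) ℝ) :=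
    isUnit_iff_constantCoeff.mpr (by simp)
  rw [← Ideal.mul_unit_mem_iff_mem _ hunit]
  refine Ideal.mem_span_pair.mpr ⟨X 0, X 1 + a * X 2, ?_⟩
  unfold quadSeries at ht ⊢
  linear_combination (X 2 ^ 2) * ht

theorem comap_mk_span_pair {a : MvPowerSeries (Fin 4) ℝ} (ha : Rhat.mk a ^ 2 = wh + 1) :
    (Ideal.span {xh, yh - Rhat.mk a * zh}).comap Rhat.mk = Ideal.span {X 0, X 1 - a * X 2} := by
  have hmap : Ideal.span {xh, yh - Rhat.mk a * zh} =
      (Ideal.span {X 0, X 1 - a * X 2}).map Rhat.mk := by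
    rw [Ideal.map_span, Set.image_pair, map_sub, map_mul]
    rfl
  rw [hmap]
  exact Ideal.comap_map_mk
    (Ideal.span_singleton_le_iff_mem _ |>.mpr (quadSeries_mem_span_X_sub_mul_X ha))

theorem mem_of_zh_mul_mem {a : MvPowerSeries (Fin 4) ℝ} (ha : Rhat.mk a ^ 2 = wh + 1) (r : Rhat)
    (hr : zh * r ∈ Ideal.span {xh, yh - Rhat.mk a * zh}) :
    r ∈ Ideal.span {xh, yh - Rhat.mk a * zh} := by
  obtain ⟨r, rfl⟩ := Rhat.mk_surjective r
  have hr' : X 2 * r ∈ (Ideal.span {xh, yh - Rhat.mk a * zh}).comap Rhat.mk := hr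
  rw [comap_mk_span_pair ha] at hr'
  have h := mem_span_X_sub_mul_X_of_X_mul_mem (by decide) (by decide) (by decide) a hr'
  rwa [← comap_mk_span_pair ha] at h

/-- The sequence `0 → R̂/Q --(y+αz)--> R̂/Q → R̂/PR̂ → 0` is a short exact sequence:
multiplication by `y + αz` on `R̂/Q` is injective, and the natural map `R̂/Q → R̂/PR̂` is
surjective with kernel equal to the image of multiplication by `y + αz`. -/
theorem ses_mul_y_add_alpha_z (α : Rhat) (hα : IsUnit α) (hsq : α ^ 2 = wh + 1) :
    Function.Injective
        (LinearMap.lsmul Rhat (Rhat ⧸ (Ideal.span {xh, yh - α * zh} : Ideal Rhat))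
          (yh + α * zh)) ∧
      ∃ g : (Rhat ⧸ (Ideal.span {xh, yh - α * zh} : Ideal Rhat)) →ₗ[Rhat] Rhat ⧸ Phat,
        (∀ r : Rhat, g (Ideal.Quotient.mk _ r) = Ideal.Quotient.mk _ r) ∧
          Function.Surjective g ∧
          LinearMap.range
              (LinearMap.lsmul Rhat (Rhat ⧸ (Ideal.span {xh, yh - α * zh} : Ideal Rhat))
                (yh + α * zh)) =
            LinearMap.ker g := by
  obtain ⟨a, rfl⟩ := Rhat.mk_surjective α
  have hP : Ideal.span {xh, yh - Rhat.mk a * zh} ⊔ Ideal.span {yh + Rhat.mk a * zh} = Phat :=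
    span_pair_sub_sup_span_add_eq xh yh zh isUnit_two_rhat hα
  have hQP : Ideal.span {xh, yh - Rhat.mk a * zh} ≤ Phat := hP ▸ le_sup_left
  refine ⟨injective_lsmul_quotient_iff.mpr fun r ↦
      mem_span_pair_sub_of_add_mul_mem isUnit_two_rhat hα (mem_of_zh_mul_mem hsq),
    (Ideal.Quotient.factorₐ Rhat hQP).toLinearMap, fun _ ↦ rfl,
    Ideal.Quotient.factor_surjective hQP, range_lsmul_eq_ker hP _ fun _ ↦ rfl⟩
end
end

section
/- If a(w), b(w), c(w) ∈ ℝ[w] are polynomials satisfying a(w)² + b(w)² = (w+1)·c(w)², then a = b = c = 0. -/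
/-!
Statement 11: if `a(w), b(w), c(w) ∈ ℝ[w]` satisfy `a(w)² + b(w)² = (w+1)·c(w)²`, then
`a = b = c = 0`.
-/

open Polynomial

private lemma sq_add_sq_eq_zero' (a b : Polynomial ℝ) (h : a ^ 2 + b ^ 2 = 0) :
    a = 0 ∧ b = 0 := by
  have ha : ∀ x : ℝ, a.eval x = 0 ∧ b.eval x = 0 := by
    intro x
    have := congrArg (Polynomial.eval x) h
    simp only [eval_add, eval_pow, eval_zero] at this
    constructor
    · nlinarith [sq_nonneg (a.eval x), sq_nonneg (b.eval x)]
    · nlinarith [sq_nonneg (a.eval x), sq_nonneg (b.eval x)]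
  constructor
  · exact Polynomial.funext (fun x => by simpa using (ha x).1)
  · exact Polynomial.funext (fun x => by simpa using (ha x).2)

private lemma descent (n : ℕ) : ∀ c : Polynomial ℝ, c.natDegree = n →
    ∀ a b : Polynomial ℝ, a ^ 2 + b ^ 2 = (X + 1) * c ^ 2 → c = 0 := by
  induction n using Nat.strong_induction_on with
  | _ n ih =>
    intro c hc a b h
    by_contra hc0
    have hXp : (X + 1 : Polynomial ℝ) = X - C (-1) := by simp
    -- eval at -1
    have heval : a.eval (-1) = 0 ∧ b.eval (-1) = 0 := by
      have := congrArg (Polynomial.eval (-1)) h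
      simp only [eval_add, eval_pow, eval_mul, eval_X, eval_one] at this
      constructor <;> nlinarith [sq_nonneg (a.eval (-1)), sq_nonneg (b.eval (-1))]
    have hda : (X + 1 : Polynomial ℝ) ∣ a := by
      rw [hXp, dvd_iff_isRoot]; exact heval.1
    have hdb : (X + 1 : Polynomial ℝ) ∣ b := by
      rw [hXp, dvd_iff_isRoot]; exact heval.2
    obtain ⟨a1, rfl⟩ := hda
    obtain ⟨b1, rfl⟩ := hdb
    have hX0 : (X + 1 : Polynomial ℝ) ≠ 0 := by
      rw [hXp]; exact X_sub_C_ne_zero (-1)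
    have hprime : Prime (X + 1 : Polynomial ℝ) := by
      rw [hXp]; exact Polynomial.prime_X_sub_C (-1)
    -- cancel one X+1
    have h2 : (X + 1) * (a1 ^ 2 + b1 ^ 2) = c ^ 2 := by
      have : (X + 1) * ((X + 1) * (a1 ^ 2 + b1 ^ 2)) = (X + 1) * c ^ 2 := by
        ring_nf; ring_nf at h; linear_combination h
      exact mul_left_cancel₀ hX0 this
    have hdc : (X + 1 : Polynomial ℝ) ∣ c := by
      have : (X + 1 : Polynomial ℝ) ∣ c ^ 2 := ⟨_, h2.symm⟩
      exact hprime.dvd_of_dvd_pow this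
    obtain ⟨c1, rfl⟩ := hdc
    have hc1 : c1 ≠ 0 := fun hh => hc0 (by rw [hh, mul_zero])
    have h3 : a1 ^ 2 + b1 ^ 2 = (X + 1) * c1 ^ 2 := by
      have : (X + 1) * (a1 ^ 2 + b1 ^ 2) = (X + 1) * ((X + 1) * c1 ^ 2) := by
        linear_combination h2
      exact mul_left_cancel₀ hX0 this
    have hdeg : c1.natDegree < n := by
      have : ((X + 1) * c1).natDegree = 1 + c1.natDegree := by
        rw [natDegree_mul hX0 hc1]
        congr 1
        rw [hXp]; exact natDegree_X_sub_C (-1)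
      rw [this] at hc
      omega
    exact hc1 (ih c1.natDegree hdeg c1 rfl a1 b1 h3)

theorem sum_sq_eq_w_add_one_mul_sq (a b c : Polynomial ℝ)
    (h : a ^ 2 + b ^ 2 = (X + 1) * c ^ 2) :
    a = 0 ∧ b = 0 ∧ c = 0 := by
  have hc : c = 0 := descent c.natDegree c rfl a b h
  subst hc
  simp only [ne_eq, OfNat.ofNat_ne_zero, not_false_eq_true, zero_pow, mul_zero] at h
  obtain ⟨ha, hb⟩ := sq_add_sq_eq_zero' a b h
  exact ⟨ha, hb, rfl⟩
end

section
/- Let K = ℝ(w) and R_P = K[x,y,z]_{(x,y,z)}/(x² + y² − (w+1)z²), with maximal ideal PR_P = (x,y,z). Then the class [R_P/PR_P] is 2-torsion in the Grothendieck group G(R_P), i.e., 2·[R_P/PR_P] = 0. -/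
/-!
Statement 16: for `K = ℝ(w)` and `R_P = K[x,y,z]_{(x,y,z)}/(x² + y² − (w+1)z²)` with maximal
ideal `P R_P = (x,y,z)`, the class `[R_P/PR_P]` is `2`-torsion in `G(R_P)`.
-/

universe u

variable (R : Type u) [CommRing R]

noncomputable section

open MvPolynomial

/-- The field `K = ℝ(w)` of rational functions in one variable over `ℝ`. -/
abbrev K : Type := RatFunc ℝ

/-- The irrelevant maximal ideal `(x, y, z)` of `K[x, y, z]`
(with `x = X 0`, `y = X 1`, `z = X 2`). -/
def mxIdeal : Ideal (MvPolynomial (Fin 3) K) :=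
  Ideal.span {X 0, X 1, X 2}

lemma mxIdeal_eq_ker :
    mxIdeal = RingHom.ker (constantCoeff : MvPolynomial (Fin 3) K →+* K) := by
  have hrange : ({X 0, X 1, X 2} : Set (MvPolynomial (Fin 3) K)) =
      Set.range (X : Fin 3 → MvPolynomial (Fin 3) K) := by
    ext p
    constructor
    · rintro (rfl | rfl | rfl) <;> exact ⟨_, rfl⟩
    · rintro ⟨i, rfl⟩
      fin_cases i <;> simp
  rw [mxIdeal, hrange]
  apply le_antisymm
  · rw [Ideal.span_le]
    rintro _ ⟨i, rfl⟩
    simp [RingHom.mem_ker]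
  · intro p hp
    rw [RingHom.mem_ker] at hp
    have key : ∀ q : MvPolynomial (Fin 3) K,
        q - C (constantCoeff q) ∈
          Ideal.span (Set.range (X : Fin 3 → MvPolynomial (Fin 3) K)) := by
      intro q
      induction q using MvPolynomial.induction_on with
      | C a => simp
      | add p q hp hq =>
          have h := Ideal.add_mem _ hp hq
          have heq : p + q - C (constantCoeff (p + q)) =
              p - C (constantCoeff p) + (q - C (constantCoeff q)) := by
            rw [map_add, C_add]; ring
          rwa [heq]
      | mul_X p i hp =>
          have hx : (X i : MvPolynomial (Fin 3) K) ∈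
              Ideal.span (Set.range (X : Fin 3 → MvPolynomial (Fin 3) K)) :=
            Ideal.subset_span ⟨i, rfl⟩
          have heq : p * X i - C (constantCoeff (p * X i)) = p * X i := by simp
          rw [heq]
          exact Ideal.mul_mem_left _ _ hx
    have h := key p
    rwa [hp, map_zero, sub_zero] at h

instance : mxIdeal.IsPrime := by
  rw [mxIdeal_eq_ker]
  exact RingHom.ker_isPrime _

/-- The quadratic polynomial `x² + y² − (w+1)z² ∈ K[x,y,z]`. -/
def quadElt : MvPolynomial (Fin 3) K :=
  X 0 ^ 2 + X 1 ^ 2 - C (RatFunc.X + 1) * X 2 ^ 2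

lemma quadElt_mem_mxIdeal : quadElt ∈ mxIdeal := by
  have h0 : (X 0 : MvPolynomial (Fin 3) K) ∈ mxIdeal :=
    Ideal.subset_span (by simp)
  have h1 : (X 1 : MvPolynomial (Fin 3) K) ∈ mxIdeal :=
    Ideal.subset_span (by simp)
  have h2 : (X 2 : MvPolynomial (Fin 3) K) ∈ mxIdeal :=
    Ideal.subset_span (by simp)
  refine Ideal.sub_mem _ (Ideal.add_mem _ ?_ ?_) ?_
  · exact Ideal.pow_mem_of_mem _ h0 2 (by norm_num)
  · exact Ideal.pow_mem_of_mem _ h1 2 (by norm_num)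
  · exact Ideal.mul_mem_left _ _ (Ideal.pow_mem_of_mem _ h2 2 (by norm_num))

/-- The local ring `R_P = K[x,y,z]_{(x,y,z)}/(x² + y² − (w+1)z²)`. -/
def LocPoly3 : Type := Localization.AtPrime mxIdeal

instance : CommRing LocPoly3 := by unfold LocPoly3; infer_instance

instance : Algebra (MvPolynomial (Fin 3) K) LocPoly3 := by unfold LocPoly3; infer_instance

/-- The ring `R_P = K[x,y,z]_{(x,y,z)}/(x² + y² − (w+1)z²)`. -/
def RP : Type :=
  LocPoly3 ⧸ Ideal.span {algebraMap (MvPolynomial (Fin 3) K) LocPoly3 quadElt}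

instance : CommRing RP := by unfold RP; infer_instance

/-- The image of a polynomial in `R_P`. -/
def toRP (p : MvPolynomial (Fin 3) K) : RP :=
  Ideal.Quotient.mk _ (algebraMap (MvPolynomial (Fin 3) K) LocPoly3 p)

/-- The maximal ideal `P R_P = (x, y, z)` of `R_P`. -/
def mRP : Ideal RP :=
  Ideal.span {toRP (X 0), toRP (X 1), toRP (X 2)}

instance : Module.Finite RP (RP ⧸ mRP) :=
  Module.Finite.of_surjective (Ideal.Quotient.mkₐ RP mRP).toLinearMap
    (Ideal.Quotient.mkₐ_surjective RP mRP)

/-!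
Let `I = (x, y) ⊆ R_P`. The elements `x, y` form a regular sequence, so the Koszul complex
`0 → R_P → R_P² → I → 0` is exact and `[I] = [R_P]`, whence `[R_P/I] = 0`. Since `w + 1` is a
unit, `z² = (x² + y²)/(w + 1) ∈ I`, and `(I : z) = PR_P = I + (z)`; so multiplication by `z` gives
an exact sequence `0 → R_P/PR_P → R_P/I → R_P/PR_P → 0`, and `2·[R_P/PR_P] = [R_P/I] = 0`.
The ring-theoretic facts are checked in `K[x,y,z]` modulo the quadric after clearing
denominators, mostly by specialising `x = y = 0`.
-/
namespace GGroup

variable {R}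

theorem cls_eq_add_of_exact_s16 {M₁ M₂ M₃ : Type u}
    [AddCommGroup M₁] [Module R M₁] [Module.Finite R M₁]
    [AddCommGroup M₂] [Module R M₂] [Module.Finite R M₂]
    [AddCommGroup M₃] [Module R M₃] [Module.Finite R M₃]
    {f : M₁ →ₗ[R] M₂} {g : M₂ →ₗ[R] M₃}
    (hf : Function.Injective f) (hg : Function.Surjective g)
    (hfg : LinearMap.range f = LinearMap.ker g) :
    cls R M₂ = cls R M₁ + cls R M₃ := by
  have hrel : FreeAbelianGroup.of (⟨M₂⟩ : FGModuleRep R) - FreeAbelianGroup.of ⟨M₁⟩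
      - FreeAbelianGroup.of ⟨M₃⟩ ∈ sesRelations R :=
    AddSubgroup.subset_closure ⟨⟨M₁⟩, ⟨M₂⟩, ⟨M₃⟩, f, g, hf, hg, hfg, rfl⟩
  rw [← sub_eq_zero, ← sub_sub]
  exact (QuotientAddGroup.eq_zero_iff _).mpr hrel

theorem cls_prod (M N : Type u) [AddCommGroup M] [Module R M] [Module.Finite R M]
    [AddCommGroup N] [Module R N] [Module.Finite R N] :
    cls R (M × N) = cls R M + cls R N :=
  cls_eq_add_of_exact_s16 LinearMap.inl_injective LinearMap.snd_surjective
    (LinearMap.range_inl R M N)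

theorem cls_quotient_span_pair_eq_zero {x y : R} (hx : x ∈ nonZeroDivisors R)
    (hkoszul : ∀ a b : R, x * a + y * b = 0 → ∃ t, a = -(y * t) ∧ b = x * t) :
    cls R (R ⧸ Ideal.span {x, y}) = 0 := by
  set I := Ideal.span {x, y}
  have : Module.Finite R I := Module.Finite.span_of_finite R (Set.toFinite _)
  let koszul₁ : R →ₗ[R] R × R := LinearMap.prod (-y • LinearMap.id) (x • LinearMap.id)
  let koszul₀ : R × R →ₗ[R] I :=
    (x • LinearMap.fst R R R + y • LinearMap.snd R R R).codRestrict I fun v =>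
      Ideal.mem_span_pair.mpr ⟨v.1, v.2, by simp [mul_comm]⟩
  have h₁ : Function.Injective koszul₁ := fun r s h => by
    simpa using (mul_cancel_left_mem_nonZeroDivisors hx).mp (congrArg Prod.snd h)
  have h₀ : Function.Surjective koszul₀ := by
    rintro ⟨r, hr⟩
    obtain ⟨a, b, rfl⟩ := Ideal.mem_span_pair.mp hr
    exact ⟨(a, b), Subtype.ext (by simp [koszul₀, mul_comm])⟩
  have h₁₀ : LinearMap.range koszul₁ = LinearMap.ker koszul₀ := by
    ext ⟨a, b⟩
    simp only [koszul₁, koszul₀, LinearMap.mem_range, LinearMap.prod_apply, LinearMap.coe_smul,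
      LinearMap.id_coe, neg_smul, Function.prod_apply, Pi.neg_apply, Pi.smul_apply, id_eq,
      smul_eq_mul, Prod.mk.injEq, LinearMap.ker_codRestrict, LinearMap.mem_ker,
      LinearMap.add_apply, LinearMap.smul_apply, LinearMap.fst_apply, LinearMap.snd_apply]
    constructor
    · rintro ⟨t, rfl, rfl⟩
      ring
    · intro h
      obtain ⟨t, rfl, rfl⟩ := hkoszul a b h
      exact ⟨t, rfl, rfl⟩
  have hI : cls R I = cls R R := by
    have := (cls_eq_add_of_exact_s16 h₁ h₀ h₁₀).symm.trans (cls_prod R R)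
    exact add_left_cancel this
  have hquot := cls_eq_add_of_exact_s16 I.injective_subtype I.mkQ_surjective
    (by rw [Submodule.range_subtype, Submodule.ker_mkQ])
  rw [hI] at hquot
  exact left_eq_add.mp hquot

theorem two_smul_cls_quotient_eq_zero {I m : Ideal R} {z : R} (hm : m = I ⊔ Ideal.span {z})
    (hI : cls R (R ⧸ I) = 0) (hz : z * z ∈ I) (hcolon : ∀ r, r * z ∈ I → r ∈ m) :
    2 • cls R (R ⧸ m) = 0 := by
  let mulZ : R →ₗ[R] R ⧸ I := I.mkQ ∘ₗ LinearMap.toSpanSingleton R R z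
  have mem_ker_mulZ (r : R) : r ∈ LinearMap.ker mulZ ↔ r * z ∈ I :=
    Submodule.Quotient.mk_eq_zero I
  have hm_le : m ≤ LinearMap.ker mulZ := by
    rw [hm]
    refine sup_le (fun r hr => ?_) ((Ideal.span_singleton_le_iff_mem _).mpr ?_) <;>
      rw [mem_ker_mulZ]
    exacts [I.mul_mem_right z hr, hz]
  have hf : Function.Injective (m.liftQ mulZ hm_le) := by
    rw [← LinearMap.ker_eq_bot]
    exact Submodule.ker_liftQ_eq_bot _ _ _ fun r hr => hcolon r ((mem_ker_mulZ r).mp hr)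
  have hfg : LinearMap.range (m.liftQ mulZ hm_le) =
      LinearMap.ker (Submodule.factor (hm ▸ le_sup_left : I ≤ m)) := by
    rw [Submodule.range_liftQ, LinearMap.range_comp, LinearMap.range_toSpanSingleton,
      Submodule.ker_mapQ, Submodule.comap_id, hm, Submodule.map_sup, Submodule.mkQ_map_self,
      bot_sup_eq]
  rw [two_smul, ← cls_eq_add_of_exact_s16 hf (Submodule.factor_surjective _) hfg, hI]

end GGroup

namespace MvPolynomial

theorem sub_aeval_mem {σ R : Type*} [CommRing R] {J : Ideal (MvPolynomial σ R)}
    {g : σ → MvPolynomial σ R} (hg : ∀ i, X i - g i ∈ J) (p : MvPolynomial σ R) :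
    p - aeval g p ∈ J := by
  have hcomp : (Ideal.Quotient.mkₐ R J).comp (aeval g) = Ideal.Quotient.mkₐ R J :=
    algHom_ext fun i => by simpa using (Ideal.Quotient.eq.mpr (hg i)).symm
  exact Ideal.Quotient.eq.mp (DFunLike.congr_fun hcomp p).symm

end MvPolynomial

local notation "S" => MvPolynomial (Fin 3) K

theorem RatFunc.X_add_one_ne_zero {F : Type*} [Field F] : (RatFunc.X + 1 : RatFunc F) ≠ 0 := by
  simpa using RatFunc.algebraMap_ne_zero (Polynomial.X_add_C_ne_zero (1 : F))

def setXYZero : S →ₐ[K] S := aeval ![0, 0, X 2]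

@[simp] theorem setXYZero_X0 : setXYZero (X 0) = 0 := by simp [setXYZero]
@[simp] theorem setXYZero_X1 : setXYZero (X 1) = 0 := by simp [setXYZero]
@[simp] theorem setXYZero_X2 : setXYZero (X 2) = X 2 := by simp [setXYZero]

theorem setXYZero_quadElt : setXYZero quadElt = -(C (RatFunc.X + 1) * X 2 ^ 2) := by
  simp [quadElt, setXYZero]

theorem setXYZero_quadElt_ne_zero : setXYZero quadElt ≠ 0 := by
  rw [setXYZero_quadElt, neg_ne_zero]
  exact mul_ne_zero (C_ne_zero.mpr RatFunc.X_add_one_ne_zero) (pow_ne_zero _ (X_ne_zero 2))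

theorem constantCoeff_setXYZero (p : S) : constantCoeff (setXYZero p) = constantCoeff p := by
  have hcomp : constantCoeff.comp setXYZero.toRingHom = (constantCoeff : S →+* K) :=
    ringHom_ext (by simp [setXYZero]) fun i => by fin_cases i <;> simp [setXYZero]
  exact RingHom.congr_fun hcomp p

theorem mem_span_X0_X1_of_setXYZero_eq_zero {p : S} (hp : setXYZero p = 0) :
    p ∈ Ideal.span {X 0, X 1} := by
  have h : p - setXYZero p ∈ Ideal.span {X 0, X 1} :=
    sub_aeval_mem (fun i => by fin_cases i <;> simp <;> exact Ideal.subset_span (by simp)) p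
  rwa [hp, sub_zero] at h

theorem X0_not_dvd_quadElt : ¬ (X 0 : S) ∣ quadElt := by
  rintro ⟨t, ht⟩
  exact setXYZero_quadElt_ne_zero (by simp [ht])

theorem mem_span_quadElt_of_mul_X0_mem {p : S} (h : p * X 0 ∈ Ideal.span {quadElt}) :
    p ∈ Ideal.span {quadElt} := by
  obtain ⟨c, hc⟩ := Ideal.mem_span_singleton'.mp h
  obtain ⟨d, rfl⟩ := ((X_prime (i := 0)).dvd_or_dvd
    (⟨p, by linear_combination hc⟩ : X 0 ∣ quadElt * c)).resolve_left X0_not_dvd_quadElt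
  exact Ideal.mem_span_singleton'.mpr
    ⟨d, mul_right_cancel₀ (X_ne_zero (0 : Fin 3)) (by linear_combination hc)⟩

theorem exists_of_X0_mul_add_X1_mul_mem_span_quadElt {a b : S}
    (h : X 0 * a + X 1 * b ∈ Ideal.span {quadElt}) :
    ∃ s, a + X 1 * s ∈ Ideal.span {quadElt} ∧ b - X 0 * s ∈ Ideal.span {quadElt} := by
  obtain ⟨c, hc⟩ := Ideal.mem_span_singleton'.mp h
  have hc₀ : setXYZero c = 0 := by
    have h₀ := congrArg setXYZero hc
    simp only [map_mul, map_add, setXYZero_X0, setXYZero_X1, zero_mul, add_zero] at h₀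
    exact (mul_eq_zero.mp h₀).resolve_right setXYZero_quadElt_ne_zero
  obtain ⟨p, q, rfl⟩ := Ideal.mem_span_pair.mp (mem_span_X0_X1_of_setXYZero_eq_zero hc₀)
  obtain ⟨s, hs⟩ := ((X_prime (i := 0)).dvd_or_dvd
    (⟨p * quadElt - a, by linear_combination -hc⟩ : X 0 ∣ X 1 * (b - q * quadElt))).resolve_left
    (by simp [X_dvd_X])
  refine ⟨s, Ideal.mem_span_singleton'.mpr ⟨p, ?_⟩,
    Ideal.mem_span_singleton'.mpr ⟨q, by linear_combination -hs⟩⟩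
  exact mul_left_cancel₀ (X_ne_zero (0 : Fin 3)) (by linear_combination hc + X 1 * hs)

theorem mem_mxIdeal_of_mul_X2_sub_mem {r a b : S}
    (h : r * X 2 - (X 0 * a + X 1 * b) ∈ Ideal.span {quadElt}) : r ∈ mxIdeal := by
  obtain ⟨c, hc⟩ := Ideal.mem_span_singleton'.mp h
  have h₀ := congrArg setXYZero hc
  simp only [map_mul, map_sub, map_add, setXYZero_X0, setXYZero_X1, setXYZero_X2,
    setXYZero_quadElt, zero_mul, add_zero, sub_zero] at h₀
  rw [← C_add] at h₀
  have hr : setXYZero r = -(setXYZero c * C (RatFunc.X + 1) * X 2) :=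
    mul_right_cancel₀ (X_ne_zero (2 : Fin 3)) (by linear_combination -h₀)
  rw [mxIdeal_eq_ker, RingHom.mem_ker, ← constantCoeff_setXYZero, hr]
  simp

def toRPHom : S →+* RP :=
  (Ideal.Quotient.mk _).comp (algebraMap S LocPoly3)

@[simp] theorem toRP_add (p q : S) : toRP (p + q) = toRP p + toRP q := map_add toRPHom p q
@[simp] theorem toRP_sub (p q : S) : toRP (p - q) = toRP p - toRP q := map_sub toRPHom p q
@[simp] theorem toRP_mul (p q : S) : toRP (p * q) = toRP p * toRP q := map_mul toRPHom p q
@[simp] theorem toRP_pow (p : S) (n : ℕ) : toRP (p ^ n) = toRP p ^ n := map_pow toRPHom p n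

instance : IsLocalization mxIdeal.primeCompl LocPoly3 :=
  Localization.isLocalization

theorem isUnit_toRP {u : S} (hu : u ∉ mxIdeal) : IsUnit (toRP u) :=
  (IsLocalization.map_units LocPoly3 (⟨u, hu⟩ : mxIdeal.primeCompl)).map (Ideal.Quotient.mk _)

theorem exists_toRP_mul_eq {ι : Type*} [Finite ι] (r : ι → RP) :
    ∃ u ∉ mxIdeal, ∃ p : ι → S, ∀ i, toRP u * r i = toRP (p i) := by
  choose ρ hρ using fun i => Ideal.Quotient.mk_surjective (r i)
  obtain ⟨⟨u, hu⟩, h⟩ := IsLocalization.exist_integer_multiples_of_finite mxIdeal.primeCompl ρ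
  choose p hp using h
  refine ⟨u, hu, p, fun i => ?_⟩
  have h := congrArg (Ideal.Quotient.mk (Ideal.span {algebraMap S LocPoly3 quadElt})) (hp i)
  rw [Algebra.smul_def, map_mul, hρ i] at h
  exact h.symm

theorem toRP_eq_zero_of_mem {p : S} (hp : p ∈ Ideal.span {quadElt}) : toRP p = 0 := by
  refine Ideal.Quotient.eq_zero_iff_mem.mpr ?_
  rw [← Set.image_singleton, ← Ideal.map_span]
  exact Ideal.mem_map_of_mem _ hp

theorem toRP_eq_zero_iff {p : S} : toRP p = 0 ↔ ∃ u ∉ mxIdeal, u * p ∈ Ideal.span {quadElt} := by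
  refine ⟨fun hp => ?_, fun ⟨u, hu, hup⟩ => ?_⟩
  · have hmem : algebraMap S LocPoly3 p ∈ (Ideal.span {quadElt}).map (algebraMap S LocPoly3) := by
      rw [Ideal.map_span, Set.image_singleton]
      exact Ideal.Quotient.eq_zero_iff_mem.mp hp
    obtain ⟨⟨⟨q, hq⟩, ⟨u, hu⟩⟩, h⟩ :=
      (IsLocalization.mem_map_algebraMap_iff mxIdeal.primeCompl LocPoly3).mp hmem
    have hpu : p * u = q :=
      IsLocalization.injective LocPoly3 mxIdeal.primeCompl_le_nonZeroDivisors
        ((map_mul _ _ _).trans h)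
    exact ⟨u, hu, mul_comm u p ▸ hpu ▸ hq⟩
  · have h := toRP_eq_zero_of_mem hup
    rwa [toRP_mul, (isUnit_toRP hu).mul_right_eq_zero] at h

theorem map_toRPHom_mxIdeal : mxIdeal.map toRPHom = mRP := by
  rw [mxIdeal, Ideal.map_span, Set.image_insert_eq, Set.image_insert_eq, Set.image_singleton]
  rfl

theorem mRP_eq_sup : mRP = Ideal.span {toRP (X 0), toRP (X 1)} ⊔ Ideal.span {toRP (X 2)} := by
  rw [mRP, ← Ideal.span_union, Set.insert_union, Set.singleton_union]

theorem toRP_X0_mem_nonZeroDivisors : toRP (X 0) ∈ nonZeroDivisors RP := by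
  refine mem_nonZeroDivisors_iff_right.mpr fun r hr => ?_
  obtain ⟨u, hu, p, hp⟩ := exists_toRP_mul_eq fun _ : Unit => r
  have hpx : toRP (p () * X 0) = 0 := by rw [toRP_mul, ← hp (), mul_assoc, hr, mul_zero]
  obtain ⟨v, hv, hvpx⟩ := toRP_eq_zero_iff.mp hpx
  have hvp : v * p () ∈ Ideal.span {quadElt} :=
    mem_span_quadElt_of_mul_X0_mem (by simpa only [mul_assoc] using hvpx)
  have hp0 : toRP (p ()) = 0 := toRP_eq_zero_iff.mpr ⟨v, hv, hvp⟩
  rwa [← hp (), (isUnit_toRP hu).mul_right_eq_zero] at hp0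

theorem exists_of_toRP_X0_mul_add_toRP_X1_mul_eq_zero {a b : RP}
    (h : toRP (X 0) * a + toRP (X 1) * b = 0) :
    ∃ t, a = -(toRP (X 1) * t) ∧ b = toRP (X 0) * t := by
  obtain ⟨u, hu, p, hp⟩ := exists_toRP_mul_eq ![a, b]
  have ha : toRP u * a = toRP (p 0) := hp 0
  have hb : toRP u * b = toRP (p 1) := hp 1
  have hp01 : toRP (X 0 * p 0 + X 1 * p 1) = 0 := by
    rw [toRP_add, toRP_mul, toRP_mul, ← ha, ← hb]
    linear_combination toRP u * h
  obtain ⟨v, hv, hvp⟩ := toRP_eq_zero_iff.mp hp01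
  obtain ⟨s, hs₀, hs₁⟩ := exists_of_X0_mul_add_X1_mul_mem_span_quadElt (a := v * p 0)
    (b := v * p 1) (by convert hvp using 1; ring)
  have e₀ := toRP_eq_zero_of_mem hs₀
  have e₁ := toRP_eq_zero_of_mem hs₁
  simp only [toRP_add, toRP_sub, toRP_mul, ← ha, ← hb] at e₀ e₁
  obtain ⟨w, hw⟩ := (isUnit_toRP hv).mul (isUnit_toRP hu)
  refine ⟨↑w⁻¹ * toRP s, ?_, ?_⟩
  · linear_combination ↑w⁻¹ * e₀ - a * w.inv_mul + ↑w⁻¹ * a * hw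
  · linear_combination ↑w⁻¹ * e₁ - b * w.inv_mul + ↑w⁻¹ * b * hw

theorem mem_mRP_of_mul_toRP_X2_mem {r : RP}
    (h : r * toRP (X 2) ∈ Ideal.span {toRP (X 0), toRP (X 1)}) : r ∈ mRP := by
  obtain ⟨a, b, hab⟩ := Ideal.mem_span_pair.mp h
  obtain ⟨u, hu, p, hp⟩ := exists_toRP_mul_eq ![r, a, b]
  have hr : toRP u * r = toRP (p 0) := hp 0
  have ha : toRP u * a = toRP (p 1) := hp 1
  have hb : toRP u * b = toRP (p 2) := hp 2
  have hp012 : toRP (p 0 * X 2 - (X 0 * p 1 + X 1 * p 2)) = 0 := by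
    simp only [toRP_add, toRP_sub, toRP_mul, ← hr, ← ha, ← hb]
    linear_combination -(toRP u * hab)
  obtain ⟨v, hv, hvp⟩ := toRP_eq_zero_iff.mp hp012
  have hvp₀ : v * p 0 ∈ mxIdeal :=
    mem_mxIdeal_of_mul_X2_sub_mem (a := v * p 1) (b := v * p 2) (by convert hvp using 1; ring)
  have hp₀ : toRP (p 0) ∈ mRP := by
    rw [← map_toRPHom_mxIdeal]
    exact Ideal.mem_map_of_mem toRPHom
      ((Ideal.IsPrime.mem_or_mem inferInstance hvp₀).resolve_left hv)
  rwa [← hr, Ideal.unit_mul_mem_iff_mem _ (isUnit_toRP hu)] at hp₀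

theorem toRP_X2_mul_self_mem :
    toRP (X 2) * toRP (X 2) ∈ Ideal.span {toRP (X 0), toRP (X 1)} := by
  have hc : C (RatFunc.X + 1) ∉ mxIdeal := by
    rw [mxIdeal_eq_ker, RingHom.mem_ker, constantCoeff_C]
    exact RatFunc.X_add_one_ne_zero
  have hq := toRP_eq_zero_of_mem (Ideal.subset_span rfl : quadElt ∈ Ideal.span {quadElt})
  simp only [quadElt, toRP_add, toRP_sub, toRP_mul, toRP_pow] at hq
  rw [← Ideal.unit_mul_mem_iff_mem _ (isUnit_toRP hc)]
  exact Ideal.mem_span_pair.mpr ⟨toRP (X 0), toRP (X 1), by linear_combination hq⟩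

/-- `2·[R_P/PR_P] = 0` in `G(R_P)`. -/
theorem class_of_residue_field_is_two_torsion :
    2 • GGroup.cls RP (RP ⧸ mRP) = 0 := by
  have hI := GGroup.cls_quotient_span_pair_eq_zero toRP_X0_mem_nonZeroDivisors
    fun _ _ => exists_of_toRP_X0_mul_add_toRP_X1_mul_eq_zero
  exact GGroup.two_smul_cls_quotient_eq_zero mRP_eq_sup hI toRP_X2_mul_self_mem
    fun _ => mem_mRP_of_mul_toRP_X2_mem
end
end
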